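/- In the Lie–Poisson algebra g^(3) on (ℝ^3)^3 with coordinates (y, x, z), the three functions C^(1) = ⟨y,z⟩ + (1/2)⟨x,x⟩, C^(2) = ⟨x,z⟩, and C^(3) = ⟨z,z⟩ are Casimir functions, i.e., their Poisson bracket with every coordinate function vanishes. -/

import Mathlib

/-! Writing `(a, b, c)` for the gradient of `f` at `p = (y, x, z)`, the cyclic symmetry
of the triple product turns the bracket into `{f, g} = ⟨∇_y g, y × a + x × b + z × c⟩
+ ⟨∇_x g, x × a + z × b⟩ + ⟨∇_z g, z × a⟩`. So `f` Poisson-commutes with every function as soon as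
the three cross-product expressions vanish. The gradients of `C^(1)`, `C^(2)`, `C^(3)` are
`(z, x, y)`, `(0, z, x)` and `(0, 0, 2z)`, for which this is `v × v = 0` and `v × w + w × v = 0`. -/

open Matrix

noncomputable section

abbrev G3 := (Fin 3 → ℝ) × (Fin 3 → ℝ) × (Fin 3 → ℝ)

def gradY (f : G3 → ℝ) (p : G3) : Fin 3 → ℝ :=
  fun a => fderiv ℝ f p (Pi.single a 1, 0, 0)

def gradX (f : G3 → ℝ) (p : G3) : Fin 3 → ℝ :=
  fun a => fderiv ℝ f p (0, Pi.single a 1, 0)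

def gradZ (f : G3 → ℝ) (p : G3) : Fin 3 → ℝ :=
  fun a => fderiv ℝ f p (0, 0, Pi.single a 1)

def pb3 (f g : G3 → ℝ) (p : G3) : ℝ :=
  p.1 ⬝ᵥ ((gradY f p) ⨯₃ (gradY g p))
    + p.2.1 ⬝ᵥ ((gradY f p) ⨯₃ (gradX g p) + (gradX f p) ⨯₃ (gradY g p))
    + p.2.2 ⬝ᵥ ((gradY f p) ⨯₃ (gradZ g p) + (gradZ f p) ⨯₃ (gradY g p))
    + p.2.2 ⬝ᵥ ((gradX f p) ⨯₃ (gradX g p))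

def coord3 (s a : Fin 3) (p : G3) : ℝ := ![p.1, p.2.1, p.2.2] s a

def Cas3 : Fin 3 → G3 → ℝ :=
  ![fun p => p.1 ⬝ᵥ p.2.2 + (1 / 2) * (p.2.1 ⬝ᵥ p.2.1),
    fun p => p.2.1 ⬝ᵥ p.2.2,
    fun p => p.2.2 ⬝ᵥ p.2.2]

section DotProduct

variable {E ι : Type*} [NormedAddCommGroup E] [NormedSpace ℝ E] [Fintype ι]
  {f g : E → ι → ℝ} {p : E}

@[fun_prop]
theorem DifferentiableAt.dotProduct (hf : DifferentiableAt ℝ f p) (hg : DifferentiableAt ℝ g p) :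
    DifferentiableAt ℝ (fun q => f q ⬝ᵥ g q) p := by
  simp only [_root_.dotProduct]
  fun_prop

theorem fderiv_dotProduct_apply (hf : DifferentiableAt ℝ f p) (hg : DifferentiableAt ℝ g p)
    (v : E) :
    fderiv ℝ (fun q => f q ⬝ᵥ g q) p v = f p ⬝ᵥ fderiv ℝ g p v + fderiv ℝ f p v ⬝ᵥ g p :=
  congr($((dotProductBilin ℝ ℝ : (ι → ℝ) →ₗ[ℝ] _ →ₗ[ℝ] ℝ).toContinuousBilinearMap.fderiv_of_bilinear
    hf hg) v)

end DotProduct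

def IsCasimir (f : G3 → ℝ) : Prop :=
  ∀ g p, pb3 f g p = 0

theorem pb3_eq_gradient_dotProduct (f g : G3 → ℝ) (p : G3) :
    pb3 f g p = gradY g p ⬝ᵥ (p.1 ⨯₃ gradY f p + p.2.1 ⨯₃ gradX f p + p.2.2 ⨯₃ gradZ f p)
      + gradX g p ⬝ᵥ (p.2.1 ⨯₃ gradY f p + p.2.2 ⨯₃ gradX f p)
      + gradZ g p ⬝ᵥ (p.2.2 ⨯₃ gradY f p) := by
  simp only [pb3, cross_apply, dotProduct, Fin.sum_univ_three, Pi.add_apply, cons_val_zero,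
    cons_val_one, cons_val]
  ring

theorem gradient_eq_of_fderiv_apply {f : G3 → ℝ} {p : G3} {a b c : Fin 3 → ℝ}
    (h : ∀ v : G3, fderiv ℝ f p v = a ⬝ᵥ v.1 + b ⬝ᵥ v.2.1 + c ⬝ᵥ v.2.2) :
    gradY f p = a ∧ gradX f p = b ∧ gradZ f p = c := by
  refine ⟨funext fun i => ?_, funext fun i => ?_, funext fun i => ?_⟩ <;>
    simp [gradY, gradX, gradZ, h]

theorem isCasimir_of_fderiv_apply {f : G3 → ℝ} {a b c : G3 → Fin 3 → ℝ}
    (h : ∀ p v : G3, fderiv ℝ f p v = a p ⬝ᵥ v.1 + b p ⬝ᵥ v.2.1 + c p ⬝ᵥ v.2.2)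
    (hy : ∀ p : G3, p.1 ⨯₃ a p + p.2.1 ⨯₃ b p + p.2.2 ⨯₃ c p = 0)
    (hx : ∀ p : G3, p.2.1 ⨯₃ a p + p.2.2 ⨯₃ b p = 0)
    (hz : ∀ p : G3, p.2.2 ⨯₃ a p = 0) :
    IsCasimir f := by
  intro g p
  obtain ⟨ha, hb, hc⟩ := gradient_eq_of_fderiv_apply (h p)
  rw [pb3_eq_gradient_dotProduct, ha, hb, hc, hy, hx, hz]
  simp

theorem fderiv_Cas3_zero_apply (p v : G3) :
    fderiv ℝ (Cas3 0) p v = p.2.2 ⬝ᵥ v.1 + p.2.1 ⬝ᵥ v.2.1 + p.1 ⬝ᵥ v.2.2 := by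
  simp (disch := fun_prop) only [Cas3, cons_val_zero, fderiv_fun_add, fderiv_const_mul,
    _root_.add_apply, _root_.smul_apply, fderiv_dotProduct_apply,
    fderiv.fst, fderiv.snd, fderiv_fun_id, ContinuousLinearMap.comp_id,
    ContinuousLinearMap.comp_apply, ContinuousLinearMap.coe_fst', ContinuousLinearMap.coe_snd',
    smul_eq_mul]
  rw [dotProduct_comm v.1, dotProduct_comm v.2.1]
  ring

theorem fderiv_Cas3_one_apply (p v : G3) :
    fderiv ℝ (Cas3 1) p v = p.2.2 ⬝ᵥ v.2.1 + p.2.1 ⬝ᵥ v.2.2 := by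
  simp (disch := fun_prop) [Cas3, fderiv_dotProduct_apply, fderiv.fst, fderiv.snd,
    dotProduct_comm v.2.1, add_comm]

theorem fderiv_Cas3_two_apply (p v : G3) :
    fderiv ℝ (Cas3 2) p v = (2 : ℝ) • p.2.2 ⬝ᵥ v.2.2 := by
  simp (disch := fun_prop) [Cas3, fderiv_dotProduct_apply, fderiv.snd, dotProduct_comm v.2.2,
    two_mul]

theorem isCasimir_Cas3_zero : IsCasimir (Cas3 0) :=
  isCasimir_of_fderiv_apply fderiv_Cas3_zero_apply
    (fun p => by rw [cross_self, add_zero, cross_anticomm'])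
    (fun p => cross_anticomm' _ _) (fun p => cross_self _)

theorem isCasimir_Cas3_one : IsCasimir (Cas3 1) :=
  isCasimir_of_fderiv_apply (a := 0) (b := fun p => p.2.2) (c := fun p => p.2.1)
    (fun p v => by simp [fderiv_Cas3_one_apply])
    (fun p => by simp [cross_anticomm']) (fun p => by simp [cross_self]) (fun p => by simp)

theorem isCasimir_Cas3_two : IsCasimir (Cas3 2) :=
  isCasimir_of_fderiv_apply (a := 0) (b := 0) (c := fun p => (2 : ℝ) • p.2.2)
    (fun p v => by simp [fderiv_Cas3_two_apply])
    (fun p => by simp [cross_self]) (fun p => by simp) (fun p => by simp)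

/-- `C^(1)`, `C^(2)`, `C^(3)` are Casimir functions of `g^(3)`: their Poisson
bracket with every coordinate function vanishes. -/
theorem stmt2 (k s a : Fin 3) (p : G3) :
    pb3 (Cas3 k) (coord3 s a) p = 0 := by
  fin_cases k
  · exact isCasimir_Cas3_zero _ p
  · exact isCasimir_Cas3_one _ p
  · exact isCasimir_Cas3_two _ p
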